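/- Let (Ω, F, P) be a probability space, p ∈ [1, ∞), and β ∈ (0, 1). The higher-order risk measure R_β : L^p(P) → ℝ satisfies the axioms of a coherent risk measure: (1) R_β(λY) = λ R_β(Y) for all λ ≥ 0 and Y ∈ L^p; (2) R_β(Y + c) = c + R_β(Y) for all c ∈ ℝ and Y ∈ L^p; (3) R_β(X + Y) ≤ R_β(X) + R_β(Y) for all X, Y ∈ L^p; (4) if X ≤ Y almost surely, then R_β(X) ≤ R_β(Y). -/

import Mathlib

open MeasureTheory

/-- The `p`-norm `‖Z‖_p = (E[|Z|^p])^{1/p}` of a real-valued random variable. -/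
noncomputable def pnorm {Ω : Type*} [MeasurableSpace Ω] (μ : Measure Ω) (p : ℝ)
    (Z : Ω → ℝ) : ℝ :=
  (∫ ω, |Z ω| ^ p ∂μ) ^ (1 / p)

/-- The higher-order risk measure `R_β(Y) = inf_t [ t + (1−β)⁻¹ ‖(Y − t)₊‖_p ]`. -/
noncomputable def riskR {Ω : Type*} [MeasurableSpace Ω] (μ : Measure Ω) (p : ℝ) (β : ℝ)
    (Y : Ω → ℝ) : ℝ :=
  ⨅ t : ℝ, (t + (1 - β)⁻¹ * pnorm μ p (fun ω => max (Y ω - t) 0))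

/-!
Once `‖·‖_p` is identified with the `L^p` seminorm, homogeneity and translativity of `R_β`
come from reparametrising the infimum (`t ↦ λ t`, `t ↦ t + c`), while subadditivity and
monotonicity follow termwise from `(X + Y − s − t)₊ ≤ (X − s)₊ + (Y − t)₊`, the Minkowski
inequality and monotonicity of the norm. The infima are finite because, by Jensen,
`E[Y] ≤ t + ‖(Y − t)₊‖_p ≤ t + (1 − β)⁻¹ ‖(Y − t)₊‖_p` for every `t`.
-/

section PNorm

variable {Ω : Type*} [MeasurableSpace Ω] {μ : Measure Ω} {p : ℝ}

lemma pnorm_nonneg (Z : Ω → ℝ) : 0 ≤ pnorm μ p Z :=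
  Real.rpow_nonneg (integral_nonneg fun _ => Real.rpow_nonneg (abs_nonneg _) _) _

lemma pnorm_eq_toReal_eLpNorm (hp : 0 < p) {Z : Ω → ℝ} (hZ : MemLp Z (ENNReal.ofReal p) μ) :
    pnorm μ p Z = (eLpNorm Z (ENNReal.ofReal p) μ).toReal := by
  have hnonneg : 0 ≤ ∫ ω, ‖Z ω‖ ^ (ENNReal.ofReal p).toReal ∂μ :=
    integral_nonneg fun _ => Real.rpow_nonneg (norm_nonneg _) _
  rw [hZ.eLpNorm_eq_integral_rpow_norm (by simpa using hp) ENNReal.ofReal_ne_top,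
    ENNReal.toReal_ofReal (Real.rpow_nonneg hnonneg _), pnorm,
    ENNReal.toReal_ofReal hp.le]
  simp only [Real.norm_eq_abs, one_div]

lemma pnorm_const_mul (hp : p ≠ 0) {c : ℝ} (hc : 0 ≤ c) (Z : Ω → ℝ) :
    pnorm μ p (fun ω => c * Z ω) = c * pnorm μ p Z := by
  have hpow : ∀ ω, |c * Z ω| ^ p = c ^ p * |Z ω| ^ p := fun ω => by
    rw [abs_mul, abs_of_nonneg hc, Real.mul_rpow hc (abs_nonneg _)]
  simp_rw [pnorm, hpow, integral_const_mul]
  rw [Real.mul_rpow (Real.rpow_nonneg hc _)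
      (integral_nonneg fun _ => Real.rpow_nonneg (abs_nonneg _) _),
    ← Real.rpow_mul hc, mul_one_div_cancel hp, Real.rpow_one]

lemma pnorm_zero (hp : p ≠ 0) : pnorm μ p (fun _ => (0 : ℝ)) = 0 := by
  simpa using pnorm_const_mul (μ := μ) hp le_rfl (fun _ => (0 : ℝ))

lemma pnorm_mono_ae (hp : 0 < p) {Z W : Ω → ℝ} (hW : MemLp W (ENNReal.ofReal p) μ)
    (hZW : ∀ᵐ ω ∂μ, |Z ω| ≤ |W ω|) : pnorm μ p Z ≤ pnorm μ p W := by
  have hWint : Integrable (fun ω => |W ω| ^ p) μ := by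
    simpa [ENNReal.toReal_ofReal hp.le] using
      hW.integrable_norm_rpow (by simpa using hp) ENNReal.ofReal_ne_top
  refine Real.rpow_le_rpow (integral_nonneg fun _ => Real.rpow_nonneg (abs_nonneg _) _)
    (integral_mono_of_nonneg (.of_forall fun _ => Real.rpow_nonneg (abs_nonneg _) _) hWint
      (hZW.mono fun _ h => Real.rpow_le_rpow (abs_nonneg _) h hp.le)) (by positivity)

lemma pnorm_add_le (hp : 1 ≤ p) {Z W : Ω → ℝ} (hZ : MemLp Z (ENNReal.ofReal p) μ)
    (hW : MemLp W (ENNReal.ofReal p) μ) :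
    pnorm μ p (fun ω => Z ω + W ω) ≤ pnorm μ p Z + pnorm μ p W := by
  have hp0 : 0 < p := one_pos.trans_le hp
  have hZW : MemLp (fun ω => Z ω + W ω) (ENNReal.ofReal p) μ := hZ.add hW
  rw [pnorm_eq_toReal_eLpNorm hp0 hZW, pnorm_eq_toReal_eLpNorm hp0 hZ,
    pnorm_eq_toReal_eLpNorm hp0 hW, ← ENNReal.toReal_add hZ.2.ne hW.2.ne]
  exact ENNReal.toReal_mono (ENNReal.add_ne_top.mpr ⟨hZ.2.ne, hW.2.ne⟩)
    (eLpNorm_add_le hZ.1 hW.1 (by simpa using hp))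

lemma integral_le_pnorm [IsProbabilityMeasure μ] (hp : 1 ≤ p) {Z : Ω → ℝ}
    (hZ : MemLp Z (ENNReal.ofReal p) μ) (hZ0 : ∀ ω, 0 ≤ Z ω) :
    ∫ ω, Z ω ∂μ ≤ pnorm μ p Z := by
  have hexp : (1 : ENNReal) ≤ ENNReal.ofReal p := by simpa using hp
  have hZ1 : MemLp Z 1 μ := hZ.mono_exponent hexp
  have hL1 : (eLpNorm Z 1 μ).toReal = ∫ ω, Z ω ∂μ := by
    rw [← ENNReal.ofReal_one] at hZ1 ⊢
    rw [← pnorm_eq_toReal_eLpNorm one_pos hZ1, pnorm]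
    simp [abs_of_nonneg (hZ0 _)]
  rw [pnorm_eq_toReal_eLpNorm (one_pos.trans_le hp) hZ, ← hL1]
  exact ENNReal.toReal_mono hZ.2.ne (eLpNorm_le_eLpNorm_of_exponent_le hexp hZ.1)

end PNorm

section RiskR

variable {Ω : Type*} [MeasurableSpace Ω] {μ : Measure Ω} {p β : ℝ}

lemma memLp_posPart_sub [IsFiniteMeasure μ] {Y : Ω → ℝ} {q : ENNReal} (hY : MemLp Y q μ)
    (t : ℝ) : MemLp (fun ω => max (Y ω - t) 0) q μ := by
  simpa using (hY.sub (memLp_const t)).pos_part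

lemma integral_le_add_mul_pnorm_posPart [IsProbabilityMeasure μ] (hp : 1 ≤ p) (hβ0 : 0 ≤ β)
    (hβ1 : β < 1) {Y : Ω → ℝ} (hY : MemLp Y (ENNReal.ofReal p) μ) (t : ℝ) :
    ∫ ω, Y ω ∂μ ≤ t + (1 - β)⁻¹ * pnorm μ p (fun ω => max (Y ω - t) 0) := by
  have hexp : (1 : ENNReal) ≤ ENNReal.ofReal p := by simpa using hp
  have hpos := memLp_posPart_sub hY t
  have hmean : ∫ ω, Y ω ∂μ - t ≤ ∫ ω, max (Y ω - t) 0 ∂μ := by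
    have := integral_mono ((hY.integrable hexp).sub (integrable_const t))
      (hpos.integrable hexp) fun ω => le_max_left (Y ω - t) 0
    simpa [integral_sub (hY.integrable hexp) (integrable_const t)] using this
  have hjensen := integral_le_pnorm hp hpos fun ω => le_max_right (Y ω - t) 0
  have hscale : pnorm μ p (fun ω => max (Y ω - t) 0)
      ≤ (1 - β)⁻¹ * pnorm μ p (fun ω => max (Y ω - t) 0) :=
    le_mul_of_one_le_left (pnorm_nonneg _) (one_le_inv₀ (by linarith) |>.mpr (by linarith))
  linarith

lemma bddBelow_riskR [IsProbabilityMeasure μ] (hp : 1 ≤ p) (hβ0 : 0 ≤ β) (hβ1 : β < 1)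
    {Y : Ω → ℝ} (hY : MemLp Y (ENNReal.ofReal p) μ) :
    BddBelow (Set.range fun t => t + (1 - β)⁻¹ * pnorm μ p (fun ω => max (Y ω - t) 0)) :=
  ⟨∫ ω, Y ω ∂μ, by
    rintro _ ⟨t, rfl⟩
    exact integral_le_add_mul_pnorm_posPart hp hβ0 hβ1 hY t⟩

lemma riskR_zero [IsProbabilityMeasure μ] (hp : 1 ≤ p) (hβ0 : 0 ≤ β) (hβ1 : β < 1) :
    riskR μ p β (fun _ => 0) = 0 := by
  have hzero := MemLp.zero' (ε := ℝ) (p := ENNReal.ofReal p) (μ := μ)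
  refine le_antisymm ?_ ?_
  · refine (ciInf_le (bddBelow_riskR hp hβ0 hβ1 hzero) 0).trans_eq ?_
    simp [pnorm_zero (μ := μ) (one_pos.trans_le hp).ne']
  · exact le_ciInf fun t => by
      simpa using integral_le_add_mul_pnorm_posPart hp hβ0 hβ1 hzero t

lemma riskR_const_mul_of_pos (hp : p ≠ 0) {c : ℝ} (hc : 0 < c) (Y : Ω → ℝ) :
    riskR μ p β (fun ω => c * Y ω) = c * riskR μ p β Y := by
  have hscale : Function.Surjective (fun t : ℝ => c * t) := fun y =>
    ⟨y / c, mul_div_cancel₀ y hc.ne'⟩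
  rw [riskR, ← hscale.iInf_comp, riskR, Real.mul_iInf_of_nonneg hc.le]
  refine iInf_congr fun t => ?_
  have hpos : (fun ω => max (c * Y ω - c * t) 0) = fun ω => c * max (Y ω - t) 0 := by
    funext ω
    rw [mul_max_of_nonneg _ _ hc.le, mul_zero, mul_sub]
  rw [hpos, pnorm_const_mul hp hc.le]
  ring

lemma riskR_add_const [IsProbabilityMeasure μ] (hp : 1 ≤ p) (hβ0 : 0 ≤ β) (hβ1 : β < 1)
    {Y : Ω → ℝ} (hY : MemLp Y (ENNReal.ofReal p) μ) (c : ℝ) :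
    riskR μ p β (fun ω => Y ω + c) = c + riskR μ p β Y := by
  rw [riskR, ← (Equiv.addRight c).iInf_comp, riskR, add_ciInf (bddBelow_riskR hp hβ0 hβ1 hY)]
  refine iInf_congr fun t => ?_
  simp only [Equiv.coe_addRight, add_sub_add_right_eq_sub]
  ring

lemma riskR_add_le [IsProbabilityMeasure μ] (hp : 1 ≤ p) (hβ0 : 0 ≤ β) (hβ1 : β < 1)
    {X Y : Ω → ℝ} (hX : MemLp X (ENNReal.ofReal p) μ) (hY : MemLp Y (ENNReal.ofReal p) μ) :
    riskR μ p β (fun ω => X ω + Y ω) ≤ riskR μ p β X + riskR μ p β Y := by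
  refine le_ciInf_add_ciInf fun s t => ?_
  have hXs := memLp_posPart_sub hX s
  have hYt := memLp_posPart_sub hY t
  have hsplit : ∀ ω, |max (X ω + Y ω - (s + t)) 0| ≤ |max (X ω - s) 0 + max (Y ω - t) 0| :=
    fun ω => by
      rw [abs_of_nonneg (le_max_right _ _), abs_of_nonneg (by positivity)]
      exact max_le (by linarith [le_max_left (X ω - s) 0, le_max_left (Y ω - t) 0])
        (by positivity)
  have hnorm : pnorm μ p (fun ω => max (X ω + Y ω - (s + t)) 0)
      ≤ pnorm μ p (fun ω => max (X ω - s) 0) + pnorm μ p (fun ω => max (Y ω - t) 0) :=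
    (pnorm_mono_ae (one_pos.trans_le hp) (hXs.add hYt) (.of_forall hsplit)).trans
      (pnorm_add_le hp hXs hYt)
  have hCnorm := mul_le_mul_of_nonneg_left hnorm (inv_nonneg.mpr (sub_nonneg.mpr hβ1.le))
  rw [mul_add] at hCnorm
  calc riskR μ p β (fun ω => X ω + Y ω)
      ≤ (s + t) + (1 - β)⁻¹ * pnorm μ p (fun ω => max (X ω + Y ω - (s + t)) 0) :=
        ciInf_le (bddBelow_riskR hp hβ0 hβ1 (hX.add hY)) (s + t)
    _ ≤ (s + (1 - β)⁻¹ * pnorm μ p (fun ω => max (X ω - s) 0))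
        + (t + (1 - β)⁻¹ * pnorm μ p (fun ω => max (Y ω - t) 0)) := by
        linarith

lemma riskR_mono [IsProbabilityMeasure μ] (hp : 1 ≤ p) (hβ0 : 0 ≤ β) (hβ1 : β < 1)
    {X Y : Ω → ℝ} (hX : MemLp X (ENNReal.ofReal p) μ) (hY : MemLp Y (ENNReal.ofReal p) μ)
    (hXY : ∀ᵐ ω ∂μ, X ω ≤ Y ω) : riskR μ p β X ≤ riskR μ p β Y := by
  refine ciInf_mono (bddBelow_riskR hp hβ0 hβ1 hX) fun t => ?_
  have hnorm : pnorm μ p (fun ω => max (X ω - t) 0) ≤ pnorm μ p (fun ω => max (Y ω - t) 0) :=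
    pnorm_mono_ae (one_pos.trans_le hp) (memLp_posPart_sub hY t) <| hXY.mono fun ω h => by
      rw [abs_of_nonneg (le_max_right _ _), abs_of_nonneg (le_max_right _ _)]
      exact max_le_max (by linarith) le_rfl
  have hC : 0 ≤ (1 - β)⁻¹ := inv_nonneg.mpr (by linarith)
  gcongr

end RiskR

/-- The higher-order risk measure `R_β` satisfies the axioms of a coherent risk measure:
positive homogeneity, cash translativity, subadditivity, and monotonicity. -/
theorem stmt13 {Ω : Type*} [MeasurableSpace Ω] (μ : Measure Ω) [IsProbabilityMeasure μ]
    (p : ℝ) (hp : 1 ≤ p) (β : ℝ) (hβ : β ∈ Set.Ioo (0 : ℝ) 1) :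
    (∀ Y : Ω → ℝ, MemLp Y (ENNReal.ofReal p) μ → ∀ lam : ℝ, 0 ≤ lam →
      riskR μ p β (fun ω => lam * Y ω) = lam * riskR μ p β Y) ∧
    (∀ Y : Ω → ℝ, MemLp Y (ENNReal.ofReal p) μ → ∀ c : ℝ,
      riskR μ p β (fun ω => Y ω + c) = c + riskR μ p β Y) ∧
    (∀ X Y : Ω → ℝ, MemLp X (ENNReal.ofReal p) μ → MemLp Y (ENNReal.ofReal p) μ →
      riskR μ p β (fun ω => X ω + Y ω) ≤ riskR μ p β X + riskR μ p β Y) ∧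
    (∀ X Y : Ω → ℝ, MemLp X (ENNReal.ofReal p) μ → MemLp Y (ENNReal.ofReal p) μ →
      (∀ᵐ ω ∂μ, X ω ≤ Y ω) → riskR μ p β X ≤ riskR μ p β Y) := by
  obtain ⟨hβ0, hβ1⟩ := hβ
  refine ⟨fun Y _ lam hlam => ?_, fun Y hY c => riskR_add_const hp hβ0.le hβ1 hY c,
    fun X Y hX hY => riskR_add_le hp hβ0.le hβ1 hX hY,
    fun X Y hX hY hXY => riskR_mono hp hβ0.le hβ1 hX hY hXY⟩
  rcases hlam.eq_or_lt with rfl | hlam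
  · simpa using riskR_zero (μ := μ) hp hβ0.le hβ1
  · exact riskR_const_mul_of_pos (one_pos.trans_le hp).ne' hlam Y
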